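/- arXiv:2008.07197 — 2 statements merged into one kernel-verified Lean document; each statement's English description precedes it below -/
import Mathlib

section
/- Let n ≥ 1 and let {V_i}_{i∈I} and {W_j}_{j∈J} be nonempty finite families of finite subsets of ℝⁿ (the vertex sets of the ∘-polytopes and ∙-polytopes of a dual n-dimer) satisfying: (a) distinct points of ⋃_i V_i are incongruent modulo ℤⁿ, and likewise distinct points of ⋃_j W_j are incongruent modulo ℤⁿ; (b) the images of ⋃_i V_i and of ⋃_j W_j in ℝⁿ/ℤⁿ coincide; (c) whenever p ∈ V_i and p' ∈ W_j satisfy p ≡ p' (mod ℤⁿ), the set of unit vectors (q−p)/‖q−p‖, as q ranges over the edge-neighbors of p in V_i, equals the set of unit vectors −(q'−p')/‖q'−p'‖, as q' ranges over the edge-neighbors of p' in W_j. Then every edge of every polytope of the dual dimer has rational slope: for every i and every edge-neighbor pair p, q in V_i there exist a nonzero integer vector m ∈ ℤⁿ and a real number t with q − p = t·m (and likewise for the W_j). -/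
/-!
Fix an edge direction `u` at a vertex of a `∘`-polytope. Follow that edge, pass to the congruent
`∙`-vertex, which by (c) also has an edge of direction `u`, follow it and pass back: by (b) and
(c) this lands on a `∘`-vertex that again has edge direction `u`, displaced by a positive multiple
of `u` modulo `ℤⁿ`. There are finitely many `∘`-vertices, so the walk closes up modulo `ℤⁿ` and
some positive multiple of `u` is an integer vector. An edge of a `∙`-polytope has the opposite
direction of an edge at the matched `∘`-vertex.
-/

/-- Two points of `ℝⁿ` are congruent modulo `ℤⁿ` if their difference has integer
coordinates. -/
def CongModZn {n : ℕ} (x y : EuclideanSpace ℝ (Fin n)) : Prop :=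
  ∀ k : Fin n, ∃ m : ℤ, x k - y k = (m : ℝ)

/-- `q` is an edge-neighbor of `p` in the finite set `V ⊂ ℝⁿ`: both are in `V`,
they are distinct, and the closed segment `[p,q]` is an extreme subset (a face)
of the convex hull of `V`, i.e. an edge of the polytope `conv V`. -/
def IsEdgeNeighbor {n : ℕ} (V : Set (EuclideanSpace ℝ (Fin n)))
    (p q : EuclideanSpace ℝ (Fin n)) : Prop :=
  p ∈ V ∧ q ∈ V ∧ p ≠ q ∧ IsExtreme ℝ (convexHull ℝ V) (segment ℝ p q)

/-- The set of unit vectors pointing from `p` towards its edge-neighbors in `V`. -/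
def EdgeDirections {n : ℕ} (V : Set (EuclideanSpace ℝ (Fin n)))
    (p : EuclideanSpace ℝ (Fin n)) : Set (EuclideanSpace ℝ (Fin n)) :=
  {u | ∃ q, IsEdgeNeighbor V p q ∧ u = ‖q - p‖⁻¹ • (q - p)}

def intLattice (n : ℕ) : AddSubgroup (EuclideanSpace ℝ (Fin n)) where
  carrier := {x | ∀ k, ∃ m : ℤ, x k = m}
  zero_mem' k := ⟨0, by simp⟩
  add_mem' {x y} hx hy k := by
    obtain ⟨a, ha⟩ := hx k
    obtain ⟨b, hb⟩ := hy k
    exact ⟨a + b, by simp [ha, hb]⟩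
  neg_mem' {x} hx k := by
    obtain ⟨a, ha⟩ := hx k
    exact ⟨-a, by simp [ha]⟩

lemma congModZn_iff_sub_mem_intLattice {n : ℕ} {x y : EuclideanSpace ℝ (Fin n)} :
    CongModZn x y ↔ x - y ∈ intLattice n :=
  Iff.rfl

lemma exists_int_slope_of_smul_mem_intLattice {n : ℕ} {v : EuclideanSpace ℝ (Fin n)}
    (hv : v ≠ 0) {s : ℝ} (hs : s ≠ 0) (h : s • v ∈ intLattice n) :
    ∃ m : Fin n → ℤ, m ≠ 0 ∧ ∃ t : ℝ, ∀ k, v k = t * (m k : ℝ) := by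
  choose m hm using h
  have hv_eq (k : Fin n) : v k = s⁻¹ * m k := by
    rw [← hm k, PiLp.smul_apply, smul_eq_mul, inv_mul_cancel_left₀ hs]
  refine ⟨m, fun hm0 => hv ?_, s⁻¹, hv_eq⟩
  ext k
  simp [hv_eq, hm0]

theorem exists_pos_smul_mem_of_forall_exists_step {E : Type*} [AddCommGroup E] [Module ℝ E]
    (Λ : AddSubgroup E) {S : Set E} (hS : S.Finite) (hne : S.Nonempty) (u : E)
    (hstep : ∀ x ∈ S, ∃ y ∈ S, ∃ ℓ : ℝ, 0 < ℓ ∧ y - (x + ℓ • u) ∈ Λ) :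
    ∃ s : ℝ, 0 < s ∧ s • u ∈ Λ := by
  have := hS.to_subtype
  have := hne.to_subtype
  let reaches : S → S → Prop := fun y x => ∃ ℓ : ℝ, 0 < ℓ ∧ (y : E) - (x + ℓ • u) ∈ Λ
  have : IsTrans S reaches := ⟨fun _ _ _ ⟨ℓ₁, hℓ₁, h₁⟩ ⟨ℓ₂, hℓ₂, h₂⟩ =>
    ⟨ℓ₁ + ℓ₂, add_pos hℓ₁ hℓ₂, by convert Λ.add_mem h₁ h₂ using 1; module⟩⟩
  by_contra! hno
  have : Std.Irrefl reaches := ⟨fun x ⟨ℓ, hℓ, h⟩ =>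
    hno ℓ hℓ (by simpa using Λ.neg_mem h)⟩
  -- Otherwise `reaches` is a strict order on a finite set, so some point has no step out of it.
  obtain ⟨x, -, hmax⟩ := (Finite.wellFounded_of_trans_of_irrefl reaches).has_min Set.univ
    ⟨Classical.arbitrary S, trivial⟩
  obtain ⟨y, hy, hxy⟩ := hstep x x.2
  exact hmax ⟨y, hy⟩ trivial hxy

section EdgeDirections

variable {n : ℕ} {A : Set (EuclideanSpace ℝ (Fin n))} {p q u : EuclideanSpace ℝ (Fin n)}

lemma IsEdgeNeighbor.symm (h : IsEdgeNeighbor A p q) : IsEdgeNeighbor A q p :=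
  ⟨h.2.1, h.1, h.2.2.1.symm, segment_symm ℝ p q ▸ h.2.2.2⟩

lemma mem_of_mem_edgeDirections (hu : u ∈ EdgeDirections A p) : p ∈ A := by
  obtain ⟨q, hpq, -⟩ := hu
  exact hpq.1

lemma exists_neg_mem_edgeDirections_add_smul (hu : u ∈ EdgeDirections A p) :
    ∃ ℓ : ℝ, 0 < ℓ ∧ -u ∈ EdgeDirections A (p + ℓ • u) := by
  obtain ⟨q, hpq, rfl⟩ := hu
  have hqp : q - p ≠ 0 := sub_ne_zero.2 hpq.2.2.1.symm
  have hend : p + ‖q - p‖ • ‖q - p‖⁻¹ • (q - p) = q := by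
    rw [smul_inv_smul₀ (norm_ne_zero_iff.2 hqp), add_sub_cancel]
  refine ⟨‖q - p‖, norm_pos_iff.2 hqp, ?_⟩
  rw [hend]
  refine ⟨p, hpq.symm, ?_⟩
  rw [norm_sub_rev, ← smul_neg, neg_sub]

lemma IsEdgeNeighbor.exists_int_slope_of_smul_mem (hpq : IsEdgeNeighbor A p q) {s : ℝ}
    (hs : s ≠ 0) (h : s • ‖q - p‖⁻¹ • (q - p) ∈ intLattice n) :
    ∃ m : Fin n → ℤ, m ≠ 0 ∧ ∃ t : ℝ, ∀ k, q k - p k = t * (m k : ℝ) := by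
  have hqp : q - p ≠ 0 := sub_ne_zero.2 hpq.2.2.1.symm
  rw [smul_smul] at h
  simpa using exists_int_slope_of_smul_mem_intLattice hqp
    (mul_ne_zero hs (inv_ne_zero (norm_ne_zero_iff.2 hqp))) h

end EdgeDirections

section DualDimer

variable {n : ℕ} {I J : Type*} {V : I → Set (EuclideanSpace ℝ (Fin n))}
  {W : J → Set (EuclideanSpace ℝ (Fin n))}

lemma mem_edgeDirections_iff_neg_mem
    (hc : ∀ i j p p', p ∈ V i → p' ∈ W j → CongModZn p p' →
      EdgeDirections (V i) p = (fun u => -u) '' EdgeDirections (W j) p')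
    {i : I} {j : J} {p p' u : EuclideanSpace ℝ (Fin n)} (hp : p ∈ V i) (hp' : p' ∈ W j)
    (hpp' : CongModZn p p') :
    u ∈ EdgeDirections (V i) p ↔ -u ∈ EdgeDirections (W j) p' := by
  rw [hc i j p p' hp hp' hpp', Set.image_neg_eq_neg, Set.mem_neg]

lemma exists_step_of_mem_edgeDirections
    (hbVW : ∀ x ∈ ⋃ i, V i, ∃ y ∈ ⋃ j, W j, CongModZn x y)
    (hbWV : ∀ y ∈ ⋃ j, W j, ∃ x ∈ ⋃ i, V i, CongModZn x y)
    (hc : ∀ i j p p', p ∈ V i → p' ∈ W j → CongModZn p p' →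
      EdgeDirections (V i) p = (fun u => -u) '' EdgeDirections (W j) p')
    {i : I} {x u : EuclideanSpace ℝ (Fin n)} (hu : u ∈ EdgeDirections (V i) x) :
    ∃ y, (∃ i', u ∈ EdgeDirections (V i') y) ∧
      ∃ ℓ : ℝ, 0 < ℓ ∧ y - (x + ℓ • u) ∈ intLattice n := by
  obtain ⟨ℓ₁, hℓ₁, hq⟩ := exists_neg_mem_edgeDirections_add_smul hu
  obtain ⟨q', hq'W, hqq'⟩ :=
    hbVW _ (Set.mem_iUnion.2 ⟨i, mem_of_mem_edgeDirections hq⟩)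
  obtain ⟨j, hq'⟩ := Set.mem_iUnion.1 hq'W
  have hu' : u ∈ EdgeDirections (W j) q' := by
    simpa using (mem_edgeDirections_iff_neg_mem hc (mem_of_mem_edgeDirections hq) hq'
      hqq').1 hq
  obtain ⟨ℓ₂, hℓ₂, hr⟩ := exists_neg_mem_edgeDirections_add_smul hu'
  obtain ⟨y, hyV, hyr⟩ := hbWV _ (Set.mem_iUnion.2 ⟨j, mem_of_mem_edgeDirections hr⟩)
  obtain ⟨i', hy⟩ := Set.mem_iUnion.1 hyV
  refine ⟨y, ⟨i', (mem_edgeDirections_iff_neg_mem hc hy (mem_of_mem_edgeDirections hr)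
    hyr).2 hr⟩, ℓ₁ + ℓ₂, add_pos hℓ₁ hℓ₂, ?_⟩
  rw [congModZn_iff_sub_mem_intLattice] at hqq' hyr
  convert (intLattice n).sub_mem hyr hqq' using 1
  module

lemma exists_pos_smul_mem_intLattice_of_mem_edgeDirections [Finite I]
    (hVfin : ∀ i, (V i).Finite)
    (hbVW : ∀ x ∈ ⋃ i, V i, ∃ y ∈ ⋃ j, W j, CongModZn x y)
    (hbWV : ∀ y ∈ ⋃ j, W j, ∃ x ∈ ⋃ i, V i, CongModZn x y)
    (hc : ∀ i j p p', p ∈ V i → p' ∈ W j → CongModZn p p' →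
      EdgeDirections (V i) p = (fun u => -u) '' EdgeDirections (W j) p')
    {i : I} {p u : EuclideanSpace ℝ (Fin n)} (hu : u ∈ EdgeDirections (V i) p) :
    ∃ s : ℝ, 0 < s ∧ s • u ∈ intLattice n := by
  refine exists_pos_smul_mem_of_forall_exists_step (intLattice n)
    (S := {x | ∃ i, u ∈ EdgeDirections (V i) x}) ?_ ⟨p, i, hu⟩ u ?_
  · refine (Set.finite_iUnion hVfin).subset ?_
    rintro x ⟨i, hx⟩
    exact Set.mem_iUnion.2 ⟨i, mem_of_mem_edgeDirections hx⟩
  · rintro x ⟨i, hx⟩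
    exact exists_step_of_mem_edgeDirections hbVW hbWV hc hx

end DualDimer

theorem dual_dimer_edges_rational_slope_general
    {n : ℕ} {I J : Type*} [Finite I]
    (V : I → Set (EuclideanSpace ℝ (Fin n))) (W : J → Set (EuclideanSpace ℝ (Fin n)))
    (hVfin : ∀ i, (V i).Finite)
    -- (b) the images of the two vertex families in ℝⁿ/ℤⁿ coincide
    (hbVW : ∀ x ∈ ⋃ i, V i, ∃ y ∈ ⋃ j, W j, CongModZn x y)
    (hbWV : ∀ y ∈ ⋃ j, W j, ∃ x ∈ ⋃ i, V i, CongModZn x y)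
    -- (c) at matched vertices, edge directions of ∙-polytopes are opposite to
    -- those of ∘-polytopes
    (hc : ∀ i j p p', p ∈ V i → p' ∈ W j → CongModZn p p' →
      EdgeDirections (V i) p = (fun u => -u) '' EdgeDirections (W j) p') :
    (∀ i p q, IsEdgeNeighbor (V i) p q →
      ∃ m : Fin n → ℤ, m ≠ 0 ∧ ∃ t : ℝ, ∀ k, q k - p k = t * (m k : ℝ)) ∧
    (∀ j p q, IsEdgeNeighbor (W j) p q →
      ∃ m : Fin n → ℤ, m ≠ 0 ∧ ∃ t : ℝ, ∀ k, q k - p k = t * (m k : ℝ)) := by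
  have hlattice {i p u} (hu : u ∈ EdgeDirections (V i) p) :=
    exists_pos_smul_mem_intLattice_of_mem_edgeDirections hVfin hbVW hbWV hc hu
  constructor
  · intro i p q hpq
    obtain ⟨s, hs, hsu⟩ := hlattice ⟨q, hpq, rfl⟩
    exact hpq.exists_int_slope_of_smul_mem hs.ne' hsu
  · intro j p' q' hpq
    obtain ⟨p, hpV, hpp'⟩ := hbWV p' (Set.mem_iUnion.2 ⟨j, hpq.1⟩)
    obtain ⟨i, hp⟩ := Set.mem_iUnion.1 hpV
    have hneg : -(‖q' - p'‖⁻¹ • (q' - p')) ∈ EdgeDirections (V i) p :=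
      (mem_edgeDirections_iff_neg_mem hc hp hpq.1 hpp').2 (by simpa using ⟨q', hpq, rfl⟩)
    obtain ⟨s, hs, hsu⟩ := hlattice hneg
    refine hpq.exists_int_slope_of_smul_mem (neg_ne_zero.2 hs.ne') ?_
    simpa using hsu

/-- Every edge of every polytope of a dual `n`-dimer has rational slope. -/
theorem dual_dimer_edges_rational_slope
    {n : ℕ} (hn : 1 ≤ n) {I J : Type*} [Nonempty I] [Nonempty J] [Finite I] [Finite J]
    (V : I → Set (EuclideanSpace ℝ (Fin n))) (W : J → Set (EuclideanSpace ℝ (Fin n)))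
    (hVfin : ∀ i, (V i).Finite) (hWfin : ∀ j, (W j).Finite)
    -- (a) distinct points of each vertex family are incongruent mod ℤⁿ
    (haV : ∀ x ∈ ⋃ i, V i, ∀ y ∈ ⋃ i, V i, CongModZn x y → x = y)
    (haW : ∀ x ∈ ⋃ j, W j, ∀ y ∈ ⋃ j, W j, CongModZn x y → x = y)
    -- (b) the images of the two vertex families in ℝⁿ/ℤⁿ coincide
    (hbVW : ∀ x ∈ ⋃ i, V i, ∃ y ∈ ⋃ j, W j, CongModZn x y)
    (hbWV : ∀ y ∈ ⋃ j, W j, ∃ x ∈ ⋃ i, V i, CongModZn x y)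
    -- (c) at matched vertices, edge directions of ∙-polytopes are opposite to
    -- those of ∘-polytopes
    (hc : ∀ i j p p', p ∈ V i → p' ∈ W j → CongModZn p p' →
      EdgeDirections (V i) p = (fun u => -u) '' EdgeDirections (W j) p') :
    (∀ i p q, IsEdgeNeighbor (V i) p q →
      ∃ m : Fin n → ℤ, m ≠ 0 ∧ ∃ t : ℝ, ∀ k, q k - p k = t * (m k : ℝ)) ∧
    (∀ j p q, IsEdgeNeighbor (W j) p q →
      ∃ m : Fin n → ℤ, m ≠ 0 ∧ ∃ t : ℝ, ∀ k, q k - p k = t * (m k : ℝ)) :=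
  dual_dimer_edges_rational_slope_general V W hVfin hbVW hbWV hc
end

section
/- For nonzero complex numbers w₁ and w₂, the 3×3 complex matrix M = [[w₂, (w₁w₂)⁻¹, w₁], [(w₁w₂)⁻¹, w₁, w₂], [w₁, w₂, (w₁w₂)⁻¹]] has a nonzero kernel vector (equivalently, the Kasteleyn complex C•(G, ∇) has nonvanishing cohomology H¹(G,∇), i.e., ∇ lies in the support of the dimer) if and only if w₁³ + w₂³ + ((w₁w₂)⁻¹)³ = 3, i.e., if and only if z₁ + z₂ + (z₁z₂)⁻¹ = 3 where z₁ = w₁³, z₂ = w₂³. -/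
namespace Matrix

theorem det_hankel_circulant_fin_three {R : Type*} [CommRing R] (a b c : R) :
    !![a, b, c; b, c, a; c, a, b].det = 3 * a * b * c - (a ^ 3 + b ^ 3 + c ^ 3) := by
  rw [det_fin_three]
  simp only [of_apply, cons_val', cons_val_zero, cons_val_one, cons_val_two, empty_val',
    cons_val_fin_one, tail_cons, vecHead]
  ring

theorem exists_mulVec_hankel_circulant_eq_zero_iff {K : Type*} [Field K] {a b c : K}
    (habc : a * b * c = 1) :
    (∃ v : Fin 3 → K, v ≠ 0 ∧ !![a, b, c; b, c, a; c, a, b] *ᵥ v = 0) ↔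
      a ^ 3 + b ^ 3 + c ^ 3 = 3 := by
  have h3abc : 3 * a * b * c = 3 := by linear_combination 3 * habc
  rw [exists_mulVec_eq_zero_iff, det_hankel_circulant_fin_three, h3abc, sub_eq_zero, eq_comm]

end Matrix

/-- The Kasteleyn matrix of the hexagonal dimer for `ℂP²` has a nonzero kernel
vector (the local system lies in the support of the dimer) if and only if
`w₁³ + w₂³ + ((w₁w₂)⁻¹)³ = 3`, i.e. `z₁ + z₂ + (z₁z₂)⁻¹ = 3` for the holonomies
`z₁ = w₁³`, `z₂ = w₂³`. -/
theorem kasteleyn_kernel_iff_support (w₁ w₂ : ℂ) (h₁ : w₁ ≠ 0) (h₂ : w₂ ≠ 0) :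
    ((∃ v : Fin 3 → ℂ, v ≠ 0 ∧
        Matrix.mulVec !![w₂, (w₁ * w₂)⁻¹, w₁;
                         (w₁ * w₂)⁻¹, w₁, w₂;
                         w₁, w₂, (w₁ * w₂)⁻¹] v = 0) ↔
      w₁ ^ 3 + w₂ ^ 3 + ((w₁ * w₂)⁻¹) ^ 3 = 3) ∧
    (w₁ ^ 3 + w₂ ^ 3 + ((w₁ * w₂)⁻¹) ^ 3 = 3 ↔
      w₁ ^ 3 + w₂ ^ 3 + (w₁ ^ 3 * w₂ ^ 3)⁻¹ = 3) := by
  have hprod : w₂ * (w₁ * w₂)⁻¹ * w₁ = 1 := by field_simp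
  refine ⟨?_, by rw [inv_pow, mul_pow]⟩
  rw [Matrix.exists_mulVec_hankel_circulant_eq_zero_iff hprod]
  constructor <;> intro h <;> linear_combination h
end
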